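/- (QDOT sample complexity.) Fix N qubits, a locality parameter k ≤ N, and a global reference string ỹ ∈ S₆^N, where S₆ is the set of the six single-qubit Pauli eigenstates. Let M = (M_x)_{x∈{0,1}^N} be a POVM on (ℂ²)^{⊗N}. Draw N_Mes i.i.d. strings y¹,…,y^{N_Mes} uniformly from S₆^N; given yⁱ, draw the outcome xⁱ ∈ {0,1}^N with probability tr(M_{xⁱ} |yⁱ⟩⟨yⁱ|). For a subset A of the qubits with |A| = k and strings x_A ∈ {0,1}^k, y_A = ỹ|_A, let h = #{i : yⁱ|_A = y_A} and, when h > 0, define M̂^A_{x_A,y_A} = (1/h)·#{i : yⁱ|_A = y_A and xⁱ|_A = x_A}. Then the probability that there exist a subset A of size k and a string x_A ∈ {0,1}^k with |M̂^A_{x_A,ỹ|_A} − M^A_{x_A,ỹ|_A}| ≥ ε is at most 2 · 2^k · C(N,k) · exp(−(1 − e^{−2ε²}) N_Mes / 6^k). In particular, N_Mes ≥ (6^k/(1 − e^{−2ε²}))·[(k+1)·log 2 + log C(N,k) + log(1/δ)] circuits suffice to estimate all such matrix elements to accuracy ε with probability at least 1 − δ. -/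

import Mathlib

open scoped BigOperators ComplexOrder

/-- The six single-qubit Pauli eigenstates `|0⟩, |1⟩, |±⟩, |±i⟩`. -/
noncomputable def s6 : Fin 6 → Fin 2 → ℂ
  | 0 => ![1, 0]
  | 1 => ![0, 1]
  | 2 => ![1 / (Real.sqrt 2 : ℂ), 1 / (Real.sqrt 2 : ℂ)]
  | 3 => ![1 / (Real.sqrt 2 : ℂ), -(1 / (Real.sqrt 2 : ℂ))]
  | 4 => ![1 / (Real.sqrt 2 : ℂ), Complex.I / (Real.sqrt 2 : ℂ)]
  | 5 => ![1 / (Real.sqrt 2 : ℂ), -(Complex.I / (Real.sqrt 2 : ℂ))]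

/-- Restriction of a string on `N` qubits to a subset `A`. -/
def res {N : ℕ} {γ : Type*} (A : Finset (Fin N)) (x : Fin N → γ) : {j // j ∈ A} → γ :=
  fun j => x j.1

/-- Merge of a bit-string on a subset `A` with a bit-string on its complement. -/
def mer {N : ℕ} (A : Finset (Fin N)) (a : {j // j ∈ A} → Fin 2)
    (b : {j // j ∉ A} → Fin 2) : Fin N → Fin 2 :=
  fun j => if h : j ∈ A then a ⟨j, h⟩ else b ⟨j, h⟩

/-- The `N`-qubit product state `|y⟩ = |y₁⟩ ⊗ ⋯ ⊗ |y_N⟩` of Pauli eigenstates. -/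
noncomputable def qState {N : ℕ} (y : Fin N → Fin 6) : (Fin N → Fin 2) → ℂ :=
  fun x => ∏ j, s6 (y j) (x j)

/-- Born-rule probability `tr(M_x |y⟩⟨y|)` of outcome `x` on input `|y⟩`. -/
noncomputable def born {N : ℕ}
    (M : (Fin N → Fin 2) → Matrix (Fin N → Fin 2) (Fin N → Fin 2) ℂ)
    (y : Fin N → Fin 6) (x : Fin N → Fin 2) : ℝ :=
  (dotProduct (star (qState y)) ((M x).mulVec (qState y))).re

/-- The reduced POVM effect
`M^A_{x_A} = ∑_{x_Ā} tr_Ā (M_{x_A x_Ā} (1_A ⊗ 1_Ā / 2^(N-k)))` on the qubits of `A`. -/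
noncomputable def redEff {N : ℕ}
    (M : (Fin N → Fin 2) → Matrix (Fin N → Fin 2) (Fin N → Fin 2) ℂ)
    (A : Finset (Fin N)) (xA : {j // j ∈ A} → Fin 2) :
    Matrix ({j // j ∈ A} → Fin 2) ({j // j ∈ A} → Fin 2) ℂ :=
  Matrix.of fun a a' =>
    (1 / (2 : ℂ) ^ (N - A.card)) *
      ∑ xb : {j // j ∉ A} → Fin 2, ∑ b : {j // j ∉ A} → Fin 2,
        M (mer A xA xb) (mer A a b) (mer A a' b)

/-- The product state `|y_A⟩` on the qubits of `A` built from Pauli eigenstates. -/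
noncomputable def qStateA {N : ℕ} (A : Finset (Fin N)) (yA : {j // j ∈ A} → Fin 6) :
    ({j // j ∈ A} → Fin 2) → ℂ :=
  fun a => ∏ j, s6 (yA j) (a j)

/-- The reduced matrix element `M^A_{x_A,y_A} = tr(|x_A⟩⟨x_A| M^A(|y_A⟩⟨y_A|))`. -/
noncomputable def redElem {N : ℕ}
    (M : (Fin N → Fin 2) → Matrix (Fin N → Fin 2) (Fin N → Fin 2) ℂ)
    (A : Finset (Fin N)) (xA : {j // j ∈ A} → Fin 2) (yA : {j // j ∈ A} → Fin 6) : ℝ :=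
  (dotProduct (star (qStateA A yA)) ((redEff M A xA).mulVec (qStateA A yA))).re

/-- The QDOT estimator `M̂^A_{x_A,y_A}`: the fraction, among the samples whose input string
restricted to `A` equals `y_A`, of those whose outcome restricted to `A` equals `x_A`. -/
noncomputable def estim {N NMes : ℕ} (A : Finset (Fin N)) (xA : {j // j ∈ A} → Fin 2)
    (yA : {j // j ∈ A} → Fin 6)
    (ω : Fin NMes → (Fin N → Fin 6) × (Fin N → Fin 2)) : ℝ :=
  ((Finset.univ.filter fun i => res A (ω i).1 = yA ∧ res A (ω i).2 = xA).card : ℝ) /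
    ((Finset.univ.filter fun i => res A (ω i).1 = yA).card : ℝ)

/-- Probability weight of a sample sequence: each input string drawn uniformly from `S₆^N`,
each outcome drawn from the Born rule. -/
noncomputable def wgt {N NMes : ℕ}
    (M : (Fin N → Fin 2) → Matrix (Fin N → Fin 2) (Fin N → Fin 2) ℂ)
    (ω : Fin NMes → (Fin N → Fin 6) × (Fin N → Fin 2)) : ℝ :=
  ∏ i, (1 / (6 : ℝ) ^ N) * born M (ω i).1 (ω i).2

open scoped Classical in
/-- Probability that for some subset `A` of size `k` and some outcome `x_A` the QDOT
estimator deviates from the reduced matrix element by at least `ε`. -/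
noncomputable def badProb (N k NMes : ℕ)
    (M : (Fin N → Fin 2) → Matrix (Fin N → Fin 2) (Fin N → Fin 2) ℂ)
    (ytilde : Fin N → Fin 6) (ε : ℝ) : ℝ :=
  ∑ ω ∈ Finset.univ.filter
      (fun ω : Fin NMes → (Fin N → Fin 6) × (Fin N → Fin 2) =>
        ∃ A : Finset (Fin N), A.card = k ∧ ∃ xA : {j // j ∈ A} → Fin 2,
          |estim A xA (res A ytilde) ω - redElem M A xA (res A ytilde)| ≥ ε),
    wgt M ω

/-!
Fix `A` and `x_A` and write `q = 6⁻ᵏ`, `p = M^A_{x_A,ỹ_A}`. Each sample independently either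
hits (its input agrees with `ỹ` on `A`) and matches (its outcome agrees with `x_A`), with
probability `q p`, or hits without matching, with probability `q (1 - p)`, or misses. The
probabilities come out this way because the six Pauli eigenstates average to
`∑ₛ |s⟩⟨s| = 3 · 1`: averaging the inputs over the qubits outside `A` prepares the maximally
mixed state there, which is the partial trace in `M^A`.

The estimator is off by `ε` only if one of two linear statistics of the hit and match counts is
nonnegative. The exponential Markov inequality with tilt `4ε`, together with Hoeffding's lemma for
a Bernoulli(`p`) variable, bounds each such event by
`(1 - q (1 - e^{-2ε²}))^{N_Mes} ≤ exp (-(1 - e^{-2ε²}) N_Mes / 6ᵏ)`. A union bound over the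
`C(N,k)` subsets and the `2ᵏ` outcomes gives the first claim, and solving it for `N_Mes` gives the
second.
-/

open Finset Matrix Real

lemma sum_union_le_add {ι M : Type*} [DecidableEq ι] [AddCommMonoid M] [PartialOrder M]
    [IsOrderedAddMonoid M] {s t : Finset ι} {f : ι → M} (hf : ∀ i, 0 ≤ f i) :
    ∑ i ∈ s ∪ t, f i ≤ ∑ i ∈ s, f i + ∑ i ∈ t, f i := by
  rw [← sum_union_inter]
  exact le_add_of_nonneg_right (sum_nonneg fun i _ => hf i)

lemma le_or_le_of_le_abs_div_add_sub {g b p ε : ℝ} (hg : 0 ≤ g) (hb : 0 ≤ b)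
    (h : ε ≤ |g / (g + b) - p|) : (p + ε) * (g + b) ≤ g ∨ (1 - p + ε) * (b + g) ≤ b := by
  rcases (add_nonneg hg hb).eq_or_lt with h0 | hpos
  -- `g / 0 = 0` in Lean, so this case is not vacuous; the first alternative reads `0 ≤ g`
  · left
    rw [← h0, mul_zero]
    exact hg
  rcases le_abs'.1 h with h | h
  · right
    have := (div_le_iff₀ hpos).1 (by linarith : g / (g + b) ≤ p - ε)
    linarith
  · left
    exact (le_div_iff₀ hpos).1 (by linarith)

lemma sum_filter_le_sum_sum_filter {α ι M : Type*} [Fintype α] [AddCommMonoid M] [PartialOrder M]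
    [IsOrderedAddMonoid M] {w : α → M} (hw : ∀ a, 0 ≤ w a) (s : Finset ι) {Q : α → Prop}
    [DecidablePred Q] {P : ι → α → Prop} [∀ i, DecidablePred (P i)]
    (hQ : ∀ a, Q a → ∃ i ∈ s, P i a) :
    ∑ a ∈ {a | Q a}, w a ≤ ∑ i ∈ s, ∑ a ∈ {a | P i a}, w a := by
  have hite : ∀ i a, 0 ≤ if P i a then w a else 0 := fun i a => ite_nonneg (hw a) le_rfl
  calc _ ≤ ∑ a ∈ {a | Q a}, ∑ i ∈ s, if P i a then w a else 0 := by
        refine sum_le_sum fun a ha => ?_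
        obtain ⟨i, hi, hPi⟩ := hQ a (mem_filter.1 ha).2
        exact (if_pos hPi).symm.le.trans (single_le_sum (fun j _ => hite j a) hi)
    _ ≤ ∑ a, ∑ i ∈ s, if P i a then w a else 0 :=
        sum_le_sum_of_subset_of_nonneg (subset_univ _) fun a _ _ => sum_nonneg fun i _ => hite i a
    _ = _ := by
        rw [sum_comm]
        simp only [sum_filter]

lemma mul_exp_neg_le_of_log_add_log_le {C a δ : ℝ} (hC : 0 < C) (hδ : 0 < δ)
    (h : log C + log (1 / δ) ≤ a) : C * exp (-a) ≤ δ := by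
  calc C * exp (-a) ≤ C * exp (-(log C + log (1 / δ))) := by gcongr
    _ = δ := by
        rw [neg_add, exp_add, exp_neg, exp_neg, exp_log hC, exp_log (by positivity)]
        field_simp

section Hoeffding

open ProbabilityTheory MeasureTheory in
lemma bernoulli_mgf_le {p : ℝ} (hp : p ∈ unitInterval) (t : ℝ) :
    p * exp (t * (1 - p)) + (1 - p) * exp (-(t * p)) ≤ exp (t ^ 2 / 8) := by
  have hbound : ∀ᵐ x ∂(bernoulliMeasure 1 0 ⟨p, hp⟩), x ∈ Set.Icc (0 : ℝ) 1 := by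
    rw [ae_iff]
    exact bernoulliMeasure_apply_of_notMem_of_notMem _ measurableSet_Icc.compl (by simp) (by simp)
  have h := (hasSubgaussianMGF_of_mem_Icc aemeasurable_id hbound).mgf_le t
  simp only [id, mgf, integral_bernoulliMeasure] at h
  convert h using 1
  · simp only [smul_eq_mul, mul_one, mul_zero, add_zero, zero_sub, mul_neg]
  · norm_num
    ring

lemma bernoulli_shifted_mgf_le {p : ℝ} (hp : p ∈ unitInterval) (ε : ℝ) :
    p * exp (4 * ε * (1 - p - ε)) + (1 - p) * exp (-(4 * ε * (p + ε))) ≤ exp (-2 * ε ^ 2) := by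
  have e₁ : exp (4 * ε * (1 - p - ε)) = exp (-(4 * ε ^ 2)) * exp (4 * ε * (1 - p)) := by
    rw [← exp_add]; congr 1; ring
  have e₂ : exp (-(4 * ε * (p + ε))) = exp (-(4 * ε ^ 2)) * exp (-(4 * ε * p)) := by
    rw [← exp_add]; congr 1; ring
  calc _ = exp (-(4 * ε ^ 2)) * (p * exp (4 * ε * (1 - p)) + (1 - p) * exp (-(4 * ε * p))) := by
        rw [e₁, e₂]; ring
    _ ≤ exp (-(4 * ε ^ 2)) * exp ((4 * ε) ^ 2 / 8) := by gcongr; exact bernoulli_mgf_le hp _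
    _ = _ := by rw [← exp_add]; congr 1; ring

end Hoeffding

section Chernoff

variable {σ : Type*} [Fintype σ] {w : σ → ℝ}

theorem sum_prod_filter_sum_nonneg_le_pow (hw : ∀ s, 0 ≤ w s) (f : σ → ℝ) (n : ℕ) :
    ∑ ω ∈ {ω : Fin n → σ | 0 ≤ ∑ i, f (ω i)}, ∏ i, w (ω i) ≤ (∑ s, w s * exp (f s)) ^ n := by
  rw [Fintype.sum_pow]
  calc _ ≤ ∑ ω ∈ {ω : Fin n → σ | 0 ≤ ∑ i, f (ω i)}, ∏ i, w (ω i) * exp (f (ω i)) := by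
        refine sum_le_sum fun ω hω => ?_
        rw [prod_mul_distrib, ← exp_sum]
        exact le_mul_of_one_le_right (prod_nonneg fun i _ => hw _)
          (one_le_exp (mem_filter.1 hω).2)
    _ ≤ _ := sum_le_sum_of_subset_of_nonneg (subset_univ _) fun ω _ _ =>
        prod_nonneg fun i _ => mul_nonneg (hw _) (exp_pos _).le

variable [DecidableEq σ]

theorem sum_prod_filter_count_ge_le (hw : ∀ s, 0 ≤ w s) (hw1 : ∑ s, w s = 1)
    {G B : Finset σ} (hGB : Disjoint G B) {p q : ℝ} (hp : p ∈ unitInterval)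
    (hG : ∑ s ∈ G, w s = q * p) (hB : ∑ s ∈ B, w s = q * (1 - p)) {ε : ℝ} (hε : 0 < ε)
    (n : ℕ) :
    ∑ ω ∈ {ω : Fin n → σ |
        (p + ε) * ((#{i | ω i ∈ G} : ℝ) + #{i | ω i ∈ B}) ≤ #{i | ω i ∈ G}},
      ∏ i, w (ω i) ≤ exp (-(1 - exp (-2 * ε ^ 2)) * q * n) := by
  -- exponential tilt `λ = 4ε`, the minimiser of Hoeffding's exponent `λ² / 8 - λ ε`
  set c₁ := 4 * ε * (1 - p - ε)
  set c₂ := -(4 * ε * (p + ε))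
  set f : σ → ℝ := fun s => (if s ∈ G then c₁ else 0) + (if s ∈ B then c₂ else 0)
  have hf : ∀ ω : Fin n → σ, ∑ i, f (ω i) =
      4 * ε * (#{i | ω i ∈ G} - (p + ε) * ((#{i | ω i ∈ G} : ℝ) + #{i | ω i ∈ B})) := by
    intro ω
    simp only [f, sum_add_distrib, ← sum_filter, sum_const, nsmul_eq_mul, c₁, c₂]
    ring
  have hmgf : ∑ s, w s * exp (f s) = 1 + q * (p * exp c₁ + (1 - p) * exp c₂ - 1) := by
    have hpt : ∀ s, w s * exp (f s) = w s + (if s ∈ G then w s else 0) * (exp c₁ - 1) +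
        (if s ∈ B then w s else 0) * (exp c₂ - 1) := by
      intro s
      by_cases hsG : s ∈ G
      · simp only [f, hsG, disjoint_left.1 hGB hsG, if_true, if_false, add_zero]; ring
      · by_cases hsB : s ∈ B <;>
          simp only [f, hsG, hsB, if_true, if_false, zero_add, add_zero, exp_zero] <;> ring
    simp only [hpt, sum_add_distrib, ← sum_mul, sum_ite_mem, univ_inter, hw1, hG, hB]
    ring
  have hq : 0 ≤ q := by
    have := add_nonneg (sum_nonneg fun s (_ : s ∈ G) => hw s)
      (sum_nonneg fun s (_ : s ∈ B) => hw s)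
    rwa [hG, hB, ← mul_add, add_sub_cancel, mul_one] at this
  have hbase : ∑ s, w s * exp (f s) ≤ exp (-(1 - exp (-2 * ε ^ 2)) * q) := by
    rw [hmgf]
    calc _ ≤ 1 + q * (exp (-2 * ε ^ 2) - 1) := by
          gcongr
          exact bernoulli_shifted_mgf_le hp ε
      _ ≤ _ := by
          rw [add_comm]
          convert add_one_le_exp _ using 2
          ring
  calc _ ≤ ∑ ω ∈ {ω : Fin n → σ | 0 ≤ ∑ i, f (ω i)}, ∏ i, w (ω i) := by
        refine sum_le_sum_of_subset_of_nonneg (fun ω => ?_) fun ω _ _ =>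
          prod_nonneg fun i _ => hw _
        simp only [mem_filter, mem_univ, true_and, hf]
        intro h
        exact mul_nonneg (by positivity) (sub_nonneg.2 h)
    _ ≤ (∑ s, w s * exp (f s)) ^ n := sum_prod_filter_sum_nonneg_le_pow hw f n
    _ ≤ exp (-(1 - exp (-2 * ε ^ 2)) * q) ^ n :=
        pow_le_pow_left₀ (sum_nonneg fun s _ => mul_nonneg (hw s) (exp_pos _).le) hbase n
    _ = _ := by rw [← exp_nat_mul]; ring_nf

theorem sum_prod_filter_abs_sub_ge_le (hw : ∀ s, 0 ≤ w s) (hw1 : ∑ s, w s = 1)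
    {G B : Finset σ} (hGB : Disjoint G B) {p q : ℝ} (hp : p ∈ unitInterval)
    (hG : ∑ s ∈ G, w s = q * p) (hB : ∑ s ∈ B, w s = q * (1 - p)) {ε : ℝ} (hε : 0 < ε)
    (n : ℕ) :
    ∑ ω ∈ {ω : Fin n → σ |
        ε ≤ |(#{i | ω i ∈ G} : ℝ) / (#{i | ω i ∈ G} + #{i | ω i ∈ B}) - p|},
      ∏ i, w (ω i) ≤ 2 * exp (-(1 - exp (-2 * ε ^ 2)) * q * n) := by
  have hw' : ∀ ω : Fin n → σ, 0 ≤ ∏ i, w (ω i) := fun ω => prod_nonneg fun i _ => hw _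
  have hupper := sum_prod_filter_count_ge_le hw hw1 hGB hp hG hB hε n
  have hlower := sum_prod_filter_count_ge_le hw hw1 hGB.symm (Set.Icc.mem_iff_one_sub_mem.1 hp)
    hB (by rwa [sub_sub_cancel]) hε n
  calc _ ≤ ∑ ω ∈ {ω : Fin n → σ |
          (p + ε) * ((#{i | ω i ∈ G} : ℝ) + #{i | ω i ∈ B}) ≤ #{i | ω i ∈ G} ∨
          (1 - p + ε) * ((#{i | ω i ∈ B} : ℝ) + #{i | ω i ∈ G}) ≤ #{i | ω i ∈ B}},
        ∏ i, w (ω i) := by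
        refine sum_le_sum_of_subset_of_nonneg (fun ω => ?_) fun ω _ _ => hw' ω
        simp only [mem_filter, mem_univ, true_and]
        exact le_or_le_of_le_abs_div_add_sub (Nat.cast_nonneg _) (Nat.cast_nonneg _)
    _ ≤ _ := by
        rw [filter_or, two_mul]
        exact (sum_union_le_add fun ω => hw' ω).trans (add_le_add hupper hlower)

end Chernoff

section Pauli

lemma s6_star_mul_self_sum (s : Fin 6) : ∑ b, star (s6 s b) * s6 s b = 1 := by
  have h : ((Real.sqrt 2 : ℝ) : ℂ) ^ 2 = 2 := by norm_cast; simp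
  fin_cases s <;>
    norm_num [s6, Fin.sum_univ_two, Complex.conj_ofReal, div_mul_div_comm, ← sq, h]

lemma sum_s6_star_mul (b b' : Fin 2) :
    ∑ s, star (s6 s b) * s6 s b' = if b = b' then 3 else 0 := by
  have h : ((Real.sqrt 2 : ℝ) : ℂ) ^ 2 = 2 := by norm_cast; simp
  fin_cases b <;> fin_cases b' <;>
    norm_num [s6, Fin.sum_univ_six, Complex.conj_ofReal, div_mul_div_comm, ← sq, h]

lemma sum_prod_s6_star_mul {ι : Type*} [Fintype ι] [DecidableEq ι] (b b' : ι → Fin 2) :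
    ∑ y : ι → Fin 6, star (∏ j, s6 (y j) (b j)) * ∏ j, s6 (y j) (b' j) =
      if b = b' then 3 ^ Fintype.card ι else 0 := by
  simp only [star_prod, ← prod_mul_distrib]
  rw [← Fintype.prod_sum (fun j s => star (s6 s (b j)) * s6 s (b' j))]
  simp only [sum_s6_star_mul, Fintype.prod_ite_zero, prod_const, card_univ, funext_iff]

lemma star_qState_dotProduct_self {N : ℕ} (y : Fin N → Fin 6) :
    star (qState y) ⬝ᵥ qState y = 1 := by
  simp only [dotProduct, qState, Pi.star_apply, star_prod, ← prod_mul_distrib]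
  rw [← Fintype.prod_sum (fun j b => star (s6 (y j) b) * s6 (y j) b)]
  simp only [s6_star_mul_self_sum, prod_const_one]

end Pauli

section Fibre

variable {N : ℕ} {γ : Type*} (A : Finset (Fin N))

def merge (a : {j // j ∈ A} → γ) (b : {j // j ∉ A} → γ) : Fin N → γ :=
  (Equiv.piEquivPiSubtypeProd (· ∈ A) fun _ => γ).symm (a, b)

def fibre [Fintype γ] [DecidableEq γ] (a : {j // j ∈ A} → γ) : Finset (Fin N → γ) :=
  {y | res A y = a}

lemma mer_eq_merge (a : {j // j ∈ A} → Fin 2) (b : {j // j ∉ A} → Fin 2) :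
    mer A a b = merge A a b := rfl

@[simp]
lemma res_merge (a : {j // j ∈ A} → γ) (b : {j // j ∉ A} → γ) : res A (merge A a b) = a := by
  funext j
  simp [res, merge, Equiv.piEquivPiSubtypeProd, j.2]

lemma sum_eq_sum_sum_merge [Fintype γ] {R : Type*} [AddCommMonoid R] (f : (Fin N → γ) → R) :
    ∑ y, f y = ∑ a, ∑ b, f (merge A a b) := by
  rw [← (Equiv.piEquivPiSubtypeProd (· ∈ A) fun _ => γ).symm.sum_comp, Fintype.sum_prod_type]
  rfl

lemma sum_fibre [Fintype γ] [DecidableEq γ] {R : Type*} [AddCommMonoid R]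
    (a : {j // j ∈ A} → γ) (f : (Fin N → γ) → R) :
    ∑ y ∈ fibre A a, f y = ∑ b, f (merge A a b) := by
  rw [fibre, sum_filter, sum_eq_sum_sum_merge A]
  simp

lemma card_subtype_notMem : Fintype.card {j // j ∉ A} = N - #A := by
  simp [Fintype.card_subtype_compl]

lemma card_fibre [Fintype γ] [DecidableEq γ] (a : {j // j ∈ A} → γ) :
    #(fibre A a) = Fintype.card γ ^ (N - #A) := by
  rw [card_eq_sum_ones, sum_fibre]
  simp

end Fibre

section PartialTrace

variable {N : ℕ} (A : Finset (Fin N))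

def ptraceCompl (K : Matrix (Fin N → Fin 2) (Fin N → Fin 2) ℂ) :
    Matrix ({j // j ∈ A} → Fin 2) ({j // j ∈ A} → Fin 2) ℂ :=
  of fun a a' => ∑ b, K (merge A a b) (merge A a' b)

lemma qState_merge (yA : {j // j ∈ A} → Fin 6) (yB : {j // j ∉ A} → Fin 6)
    (a : {j // j ∈ A} → Fin 2) (b : {j // j ∉ A} → Fin 2) :
    qState (merge A yA yB) (merge A a b) = qStateA A yA a * ∏ j, s6 (yB j) (b j) := by
  rw [qState, qStateA, ← Fintype.prod_subtype_mul_prod_subtype (· ∈ A)]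
  congr 1
  all_goals
    exact prod_congr (by ext; simp) fun j _ => by simp [merge, Equiv.piEquivPiSubtypeProd, j.2]

lemma sum_fibre_star_qState_mul_qState (yA : {j // j ∈ A} → Fin 6)
    (a a' : {j // j ∈ A} → Fin 2) (b b' : {j // j ∉ A} → Fin 2) :
    ∑ y ∈ fibre A yA, star (qState y (merge A a b)) * qState y (merge A a' b') =
      if b = b' then 3 ^ (N - #A) * (star (qStateA A yA a) * qStateA A yA a') else 0 := by
  simp only [sum_fibre, qState_merge, star_mul']
  rw [sum_congr rfl fun _ _ => mul_mul_mul_comm .., ← mul_sum, sum_prod_s6_star_mul,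
    card_subtype_notMem]
  split_ifs <;> ring

lemma star_dotProduct_mulVec_eq_sum {n : Type*} [Fintype n] (v : n → ℂ) (K : Matrix n n ℂ) :
    star v ⬝ᵥ K *ᵥ v = ∑ z, ∑ z', K z z' * (star (v z) * v z') := by
  simp only [dotProduct, mulVec, Pi.star_apply, mul_sum]
  exact sum_congr rfl fun _ _ => sum_congr rfl fun _ _ => by ring

theorem sum_fibre_star_qState_dotProduct_mulVec (K : Matrix (Fin N → Fin 2) (Fin N → Fin 2) ℂ)
    (yA : {j // j ∈ A} → Fin 6) :
    ∑ y ∈ fibre A yA, star (qState y) ⬝ᵥ K *ᵥ qState y =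
      3 ^ (N - #A) * (star (qStateA A yA) ⬝ᵥ ptraceCompl A K *ᵥ qStateA A yA) := by
  have hρ : ∀ z z', ∑ y ∈ fibre A yA, K z z' * (star (qState y z) * qState y z') =
      K z z' * ∑ y ∈ fibre A yA, star (qState y z) * qState y z' := fun _ _ => (mul_sum ..).symm
  simp only [star_dotProduct_mulVec_eq_sum, ptraceCompl, of_apply, mul_sum, sum_mul]
  rw [sum_comm]
  simp only [sum_comm (s := fibre A yA), hρ]
  simp only [sum_eq_sum_sum_merge A, sum_fibre_star_qState_mul_qState, mul_ite, mul_zero,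
    sum_ite_eq, mem_univ, if_true]
  exact sum_congr rfl fun _ _ => sum_comm.trans (by simp only [mul_left_comm (K _ _)])

end PartialTrace

section Born

variable {N : ℕ} {M : (Fin N → Fin 2) → Matrix (Fin N → Fin 2) (Fin N → Fin 2) ℂ}

lemma born_nonneg (hpsd : ∀ x, (M x).PosSemidef) (y : Fin N → Fin 6) (x : Fin N → Fin 2) :
    0 ≤ born M y x :=
  (Complex.le_def.mp ((hpsd x).dotProduct_mulVec_nonneg (qState y))).1

lemma sum_born_eq_re (y : Fin N → Fin 6) (s : Finset (Fin N → Fin 2)) :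
    ∑ x ∈ s, born M y x = (star (qState y) ⬝ᵥ (∑ x ∈ s, M x) *ᵥ qState y).re := by
  rw [sum_mulVec, dotProduct_sum, Complex.re_sum]
  rfl

lemma sum_born (hsum : ∑ x, M x = 1) (y : Fin N → Fin 6) : ∑ x, born M y x = 1 := by
  rw [sum_born_eq_re, hsum, one_mulVec, star_qState_dotProduct_self, Complex.one_re]

lemma redEff_eq_smul_ptraceCompl (A : Finset (Fin N)) (xA : {j // j ∈ A} → Fin 2) :
    redEff M A xA = (1 / 2 ^ (N - #A) : ℂ) • ptraceCompl A (∑ xb, M (merge A xA xb)) := by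
  ext a a'
  simp only [redEff, ptraceCompl, mer_eq_merge, of_apply, Matrix.smul_apply,
    Matrix.sum_apply, smul_eq_mul]
  rw [sum_comm]

theorem sum_fibre_sum_fibre_born (A : Finset (Fin N)) (xA : {j // j ∈ A} → Fin 2)
    (yA : {j // j ∈ A} → Fin 6) :
    ∑ y ∈ fibre A yA, ∑ x ∈ fibre A xA, born M y x = 6 ^ (N - #A) * redElem M A xA yA := by
  simp only [sum_born_eq_re, ← Complex.re_sum, sum_fibre A xA M,
    sum_fibre_star_qState_dotProduct_mulVec, redElem, redEff_eq_smul_ptraceCompl, smul_mulVec,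
    dotProduct_smul, smul_eq_mul]
  generalize star (qStateA A yA) ⬝ᵥ _ = z
  have h3 : (3 : ℂ) ^ (N - #A) = ((3 ^ (N - #A) : ℝ) : ℂ) := by push_cast; rfl
  have h2 : (1 / 2 ^ (N - #A) : ℂ) = ((1 / 2 ^ (N - #A) : ℝ) : ℂ) := by push_cast; rfl
  rw [h3, h2, Complex.re_ofReal_mul, Complex.re_ofReal_mul, show (6 : ℝ) = 3 * 2 by norm_num,
    mul_pow]
  field_simp

lemma sum_fibre_sum_born (hsum : ∑ x, M x = 1) (A : Finset (Fin N))
    (yA : {j // j ∈ A} → Fin 6) :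
    ∑ y ∈ fibre A yA, ∑ x, born M y x = 6 ^ (N - #A) := by
  simp [sum_born hsum, card_fibre]

end Born

section Sampling

variable {N : ℕ} (M : (Fin N → Fin 2) → Matrix (Fin N → Fin 2) (Fin N → Fin 2) ℂ)

noncomputable def sampleWeight (s : (Fin N → Fin 6) × (Fin N → Fin 2)) : ℝ :=
  1 / 6 ^ N * born M s.1 s.2

variable {M}

lemma wgt_eq_prod_sampleWeight {n : ℕ} (ω : Fin n → (Fin N → Fin 6) × (Fin N → Fin 2)) :
    wgt M ω = ∏ i, sampleWeight M (ω i) := rfl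

lemma sum_sampleWeight (hsum : ∑ x, M x = 1) : ∑ s, sampleWeight M s = 1 := by
  simp [sampleWeight, Fintype.sum_prod_type, ← mul_sum, sum_born hsum]

lemma sum_sampleWeight_fibre_product (A : Finset (Fin N)) (yA : {j // j ∈ A} → Fin 6)
    (t : Finset (Fin N → Fin 2)) :
    ∑ s ∈ fibre A yA ×ˢ t, sampleWeight M s =
      1 / 6 ^ N * ∑ y ∈ fibre A yA, ∑ x ∈ t, born M y x := by
  simp only [sum_product, sampleWeight, mul_sum]

lemma pow_eq_pow_sub_card_mul_pow_card {R : Type*} [Monoid R] (a : R) (A : Finset (Fin N)) :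
    a ^ N = a ^ (N - #A) * a ^ #A := by
  rw [← pow_add, Nat.sub_add_cancel (card_le_univ A |>.trans_eq (Fintype.card_fin N))]

lemma sum_sampleWeight_fibre_product_fibre (A : Finset (Fin N)) (xA : {j // j ∈ A} → Fin 2)
    (yA : {j // j ∈ A} → Fin 6) :
    ∑ s ∈ fibre A yA ×ˢ fibre A xA, sampleWeight M s = 1 / 6 ^ #A * redElem M A xA yA := by
  rw [sum_sampleWeight_fibre_product, sum_fibre_sum_fibre_born,
    pow_eq_pow_sub_card_mul_pow_card 6 A]
  field_simp

lemma sum_sampleWeight_fibre_product_compl (hsum : ∑ x, M x = 1) (A : Finset (Fin N))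
    (xA : {j // j ∈ A} → Fin 2) (yA : {j // j ∈ A} → Fin 6) :
    ∑ s ∈ fibre A yA ×ˢ (fibre A xA)ᶜ, sampleWeight M s =
      1 / 6 ^ #A * (1 - redElem M A xA yA) := by
  have hcompl : ∀ y, ∑ x ∈ (fibre A xA)ᶜ, born M y x =
      ∑ x, born M y x - ∑ x ∈ fibre A xA, born M y x :=
    fun y => eq_sub_of_add_eq (sum_compl_add_sum ..)
  rw [sum_sampleWeight_fibre_product, sum_congr rfl fun y _ => hcompl y, sum_sub_distrib,
    sum_fibre_sum_born hsum, sum_fibre_sum_fibre_born, pow_eq_pow_sub_card_mul_pow_card 6 A]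
  field_simp

lemma estim_eq_div (A : Finset (Fin N)) (xA : {j // j ∈ A} → Fin 2) (yA : {j // j ∈ A} → Fin 6)
    {n : ℕ} (ω : Fin n → (Fin N → Fin 6) × (Fin N → Fin 2)) :
    estim A xA yA ω = (#{i | ω i ∈ fibre A yA ×ˢ fibre A xA} : ℝ) /
      (#{i | ω i ∈ fibre A yA ×ˢ fibre A xA} + #{i | ω i ∈ fibre A yA ×ˢ (fibre A xA)ᶜ}) := by
  simp only [estim, fibre, mem_product, mem_compl, mem_filter, mem_univ, true_and]
  rw [← Nat.cast_add, ← filter_filter, ← filter_filter, card_filter_add_card_filter_not]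

theorem sum_wgt_filter_estim_sub_ge_le (hpsd : ∀ x, (M x).PosSemidef) (hsum : ∑ x, M x = 1)
    (A : Finset (Fin N)) (xA : {j // j ∈ A} → Fin 2) (yA : {j // j ∈ A} → Fin 6) {ε : ℝ}
    (hε : 0 < ε) (n : ℕ) :
    ∑ ω ∈ {ω : Fin n → (Fin N → Fin 6) × (Fin N → Fin 2) |
        ε ≤ |estim A xA yA ω - redElem M A xA yA|}, wgt M ω ≤
      2 * exp (-((1 - exp (-2 * ε ^ 2)) * n / 6 ^ #A)) := by
  have hw : ∀ s, 0 ≤ sampleWeight M s := fun s => mul_nonneg (by positivity) (born_nonneg hpsd ..)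
  have hG := sum_sampleWeight_fibre_product_fibre (M := M) A xA yA
  have hB := sum_sampleWeight_fibre_product_compl hsum A xA yA
  have hp : redElem M A xA yA ∈ unitInterval := by
    have hq : (0 : ℝ) < 1 / 6 ^ #A := by positivity
    refine ⟨nonneg_of_mul_nonneg_right ?_ hq, sub_nonneg.1 (nonneg_of_mul_nonneg_right ?_ hq)⟩
    · exact hG ▸ sum_nonneg fun s _ => hw s
    · exact hB ▸ sum_nonneg fun s _ => hw s
  have h := sum_prod_filter_abs_sub_ge_le hw (sum_sampleWeight hsum)
    (disjoint_product.2 (Or.inr disjoint_compl_right)) hp hG hB hε n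
  simp only [← estim_eq_div] at h
  simp only [wgt_eq_prod_sampleWeight]
  convert h using 3
  ring

end Sampling

lemma badProb_le_sum (N k NMes : ℕ)
    (M : (Fin N → Fin 2) → Matrix (Fin N → Fin 2) (Fin N → Fin 2) ℂ)
    (hpsd : ∀ x, (M x).PosSemidef) (ytilde : Fin N → Fin 6) (ε : ℝ) :
    badProb N k NMes M ytilde ε ≤ ∑ A ∈ powersetCard k univ, ∑ xA : {j // j ∈ A} → Fin 2,
      ∑ ω ∈ {ω : Fin NMes → (Fin N → Fin 6) × (Fin N → Fin 2) |
        ε ≤ |estim A xA (res A ytilde) ω - redElem M A xA (res A ytilde)|}, wgt M ω := by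
  classical
  have hw : ∀ ω : Fin NMes → (Fin N → Fin 6) × (Fin N → Fin 2), 0 ≤ wgt M ω :=
    fun ω => prod_nonneg fun i _ => mul_nonneg (by positivity) (born_nonneg hpsd ..)
  refine (sum_filter_le_sum_sum_filter hw (powersetCard k univ) fun ω ⟨A, hA, hxA⟩ =>
    ⟨A, mem_powersetCard_univ.2 hA, hxA⟩).trans (sum_le_sum fun A _ => ?_)
  exact sum_filter_le_sum_sum_filter hw univ fun ω ⟨xA, hxA⟩ => ⟨xA, mem_univ _, hxA⟩

theorem badProb_le (N k NMes : ℕ)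
    (M : (Fin N → Fin 2) → Matrix (Fin N → Fin 2) (Fin N → Fin 2) ℂ)
    (hpsd : ∀ x, (M x).PosSemidef) (hsum : ∑ x, M x = 1) (ytilde : Fin N → Fin 6) {ε : ℝ}
    (hε : 0 < ε) :
    badProb N k NMes M ytilde ε ≤
      2 * 2 ^ k * (N.choose k : ℝ) * exp (-((1 - exp (-2 * ε ^ 2)) * NMes / 6 ^ k)) := by
  calc _ ≤ ∑ A ∈ powersetCard k univ, ∑ _xA : {j // j ∈ A} → Fin 2,
          2 * exp (-((1 - exp (-2 * ε ^ 2)) * NMes / 6 ^ k)) :=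
        (badProb_le_sum N k NMes M hpsd ytilde ε).trans <| sum_le_sum fun A hA =>
          sum_le_sum fun xA _ => (mem_powersetCard_univ.1 hA) ▸
            sum_wgt_filter_estim_sub_ge_le hpsd hsum A xA _ hε NMes
    _ = _ := by
        rw [sum_congr rfl fun A hA => by
          rw [sum_const, card_univ, Fintype.card_fun, Fintype.card_coe, mem_powersetCard_univ.1 hA]]
        simp only [sum_const, card_powersetCard, card_univ, Fintype.card_fin, nsmul_eq_mul]
        push_cast
        ring

theorem qdot_sample_complexity_general (N k NMes : ℕ)
    (M : (Fin N → Fin 2) → Matrix (Fin N → Fin 2) (Fin N → Fin 2) ℂ)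
    (hpsd : ∀ x, (M x).PosSemidef) (hsum : ∑ x, M x = 1)
    (ytilde : Fin N → Fin 6) (ε : ℝ) (hε : 0 < ε) :
    badProb N k NMes M ytilde ε ≤
        2 * 2 ^ k * (N.choose k : ℝ) *
          Real.exp (-(1 - Real.exp (-2 * ε ^ 2)) * NMes / 6 ^ k) ∧
      ∀ δ : ℝ, 0 < δ →
        (NMes : ℝ) ≥ ((6 : ℝ) ^ k / (1 - Real.exp (-2 * ε ^ 2))) *
            (((k : ℝ) + 1) * Real.log 2 + Real.log (N.choose k : ℝ) + Real.log (1 / δ)) →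
        badProb N k NMes M ytilde ε ≤ δ := by
  have hbound := badProb_le N k NMes M hpsd hsum ytilde hε
  refine ⟨by rwa [neg_mul, neg_div], fun δ hδ hn => hbound.trans ?_⟩
  rcases (N.choose k).eq_zero_or_pos with h0 | hpos
  · simp [h0, hδ.le]
  refine mul_exp_neg_le_of_log_add_log_le (by positivity) hδ ?_
  set c := 1 - exp (-2 * ε ^ 2)
  have hc : 0 < c := sub_pos.2 (exp_lt_one_iff.2 (by nlinarith))
  rw [log_mul (by positivity) (by positivity), log_mul (by positivity) (by positivity), log_pow,
    le_div_iff₀ (by positivity)]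
  calc _ = 6 ^ k / c * ((k + 1) * log 2 + log (N.choose k) + log (1 / δ)) * c := by
        field_simp
        ring
    _ ≤ NMes * c := by gcongr
    _ = _ := by ring

/-- QDOT sample complexity: for a POVM `M` on `N` qubits, inputs drawn
uniformly i.i.d. from `S₆^N` and Born-rule outcomes, the probability that for some subset
`A` of size `k` and some `x_A` the estimator deviates by `≥ ε` is at most
`2 · 2^k · C(N,k) · exp(−(1 − e^{−2ε²}) N_Mes / 6^k)`; consequently
`N_Mes ≥ (6^k/(1 − e^{−2ε²}))[(k+1)log 2 + log C(N,k) + log(1/δ)]` circuits suffice for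
accuracy `ε` with probability `≥ 1 − δ`. -/
theorem qdot_sample_complexity (N k NMes : ℕ) (hk : k ≤ N)
    (M : (Fin N → Fin 2) → Matrix (Fin N → Fin 2) (Fin N → Fin 2) ℂ)
    (hpsd : ∀ x, (M x).PosSemidef) (hsum : ∑ x, M x = 1)
    (ytilde : Fin N → Fin 6) (ε : ℝ) (hε : 0 < ε) :
    badProb N k NMes M ytilde ε ≤
        2 * 2 ^ k * (N.choose k : ℝ) *
          Real.exp (-(1 - Real.exp (-2 * ε ^ 2)) * NMes / 6 ^ k) ∧
      ∀ δ : ℝ, 0 < δ →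
        (NMes : ℝ) ≥ ((6 : ℝ) ^ k / (1 - Real.exp (-2 * ε ^ 2))) *
            (((k : ℝ) + 1) * Real.log 2 + Real.log (N.choose k : ℝ) + Real.log (1 / δ)) →
        badProb N k NMes M ytilde ε ≤ δ :=
  qdot_sample_complexity_general N k NMes M hpsd hsum ytilde ε hε
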